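/- Let a₁,a₂,a₃ be pairwise coprime positive integers with a₁ > a₂ > a₃ > 1, and suppose L₁ = 2. Then for every {j,k} = {2,3} (i.e. for (j,k) = (2,3) and (j,k) = (3,2)), one has [L_j·a_j·a_k⁻¹]_{a₁}·a_k = L_j·a_j − a₁. -/

import Mathlib

/-!
Since `L₁ = 2`, `a₁ ∉ ⟨a₂,a₃⟩` but `2a₁ = p·a_j + q·a_k`; in particular `a₃ ≠ 2`, as otherwise the
odd numbers `a₁ > a₂` would give `a₁ ∈ ⟨a₂,2⟩`. Write `L_j·a_j = λ·a₁ + μ·a_k` with `L_j` minimal.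
The inverse of `a_j` modulo `a_k` gives some `u < a_k` with `u·a_j ∈ a₁ + a_k ℕ` (otherwise
`a₁ ∈ ⟨a_j,a_k⟩`), so `L_j < a_k` and hence `λ ≠ 0`. If `λ ≥ 2`, subtracting the representation
of `2a₁` puts `(L_j - p)·a_j` in `⟨a₁,a_k⟩`, contradicting minimality (or, when `p ≥ L_j`, forces
`L_j·a_j = 2a₁`, impossible as `a_j > 2`). So `L_j·a_j = a₁ + μ·a_k` with `μ < a₁`, and reducing
modulo `a₁` identifies `μ` with `[L_j·a_j·a_k⁻¹]_{a₁}`.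
-/

/-- The numerical semigroup generated by `a` and `b`:
`⟨a,b⟩ = {λ₁a + λ₂b : λ₁, λ₂ ∈ ℕ}`. -/
def numSg (a b : ℕ) : Set ℕ := {x | ∃ p q : ℕ, x = p * a + q * b}

/-- `[m⁻¹]ₙ`: the representative in `[0,n)` of the inverse of `m` modulo `n`
(meaningful when `gcd m n = 1` and `n > 0`).  The remainder operator `[m]ₙ`
is ordinary `m % n`. -/
noncomputable def modInv (m n : ℕ) : ℕ := ((m : ZMod n)⁻¹).val


/-- `Lval a b c` is the least positive integer `x` with `x*a ∈ ⟨b,c⟩`. -/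
noncomputable def Lval (a b c : ℕ) : ℕ := sInf {x : ℕ | 0 < x ∧ x * a ∈ numSg b c}

lemma numSg_comm (a b : ℕ) : numSg a b = numSg b a := by
  ext x
  constructor <;> rintro ⟨p, q, rfl⟩ <;> exact ⟨q, p, by ring⟩

lemma mem_numSg_of_modEq {a b c u : ℕ} (hle : u * b ≤ a) (hmod : a ≡ u * b [MOD c]) :
    a ∈ numSg b c := by
  obtain ⟨s, hs⟩ := (Nat.modEq_iff_dvd' hle).mp hmod.symm
  exact ⟨u, s, by rw [mul_comm c s] at hs; omega⟩

lemma mem_numSg_two {a b : ℕ} (ha : Odd a) (hb : Odd b) (hba : b ≤ a) : a ∈ numSg b 2 := by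
  obtain ⟨r, hr⟩ := Nat.Odd.sub_odd ha hb
  exact ⟨1, r, by omega⟩

section Lval

variable {a b c : ℕ}

lemma Lval_le {x : ℕ} (hx : 0 < x) (hmem : x * a ∈ numSg b c) : Lval a b c ≤ x :=
  Nat.sInf_le ⟨hx, hmem⟩

lemma Lval_spec (hc : 0 < c) : 0 < Lval a b c ∧ Lval a b c * a ∈ numSg b c :=
  Nat.sInf_mem (s := {x | 0 < x ∧ x * a ∈ numSg b c}) ⟨c, hc, 0, a, by ring⟩

lemma not_mem_and_two_mul_mem_of_Lval_eq_two (h : Lval a b c = 2) :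
    a ∉ numSg b c ∧ 2 * a ∈ numSg b c := by
  have hne : {x | 0 < x ∧ x * a ∈ numSg b c}.Nonempty := by
    by_contra hempty
    rw [Set.not_nonempty_iff_eq_empty] at hempty
    rw [Lval, hempty, Nat.sInf_empty] at h
    omega
  refine ⟨fun ha => ?_, ?_⟩
  · have := Lval_le (a := a) (b := b) (c := c) one_pos (by rwa [one_mul])
    omega
  · have := (Nat.sInf_mem hne).2
    rwa [← Lval, h] at this

lemma Lval_lt_of_not_mem (hbc : Nat.Coprime b c) (ha : a ∉ numSg b c) : Lval b a c < c := by
  have hc : c ≠ 0 := by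
    rintro rfl
    exact ha ⟨a, 0, by rw [(Nat.coprime_zero_right b).mp hbc]; ring⟩
  have : NeZero c := ⟨hc⟩
  set u := ((a : ZMod c) * (b : ZMod c)⁻¹).val with hu
  have hub : a ≡ u * b [MOD c] := by
    rw [← ZMod.natCast_eq_natCast_iff]
    push_cast
    rw [hu, ZMod.natCast_val, ZMod.cast_id, mul_assoc,
      ZMod.inv_mul_of_unit _ ((ZMod.isUnit_iff_coprime b c).mpr hbc), mul_one]
  have hlt : a < u * b := by
    by_contra! hle
    exact ha (mem_numSg_of_modEq hle hub)
  obtain ⟨s, hs⟩ := (Nat.modEq_iff_dvd' hlt.le).mp hub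
  have hLu : Lval b a c ≤ u :=
    Lval_le (Nat.pos_of_ne_zero (by rintro h; simp [h] at hlt)) ⟨1, s, by
      rw [mul_comm c s] at hs; omega⟩
  exact hLu.trans_lt (ZMod.val_lt _)

lemma Lval_coeff_lt_two (hab : Nat.Coprime a b) (hac : Nat.Coprime a c) (hb : 2 < b)
    (hc : 2 < c) (h2 : 2 * a ∈ numSg b c) {l μ : ℕ} (hrep : Lval b a c * b = l * a + μ * c) :
    l < 2 := by
  by_contra! hl
  obtain ⟨p, q, h2eq⟩ := h2
  have hp : 0 < p := by
    refine Nat.pos_of_ne_zero fun hp => ?_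
    have hdvd : c ∣ 2 * a := ⟨q, by rw [h2eq, hp]; ring⟩
    have := Nat.le_of_dvd two_pos (hac.symm.dvd_of_dvd_mul_right hdvd)
    omega
  rcases lt_or_ge p (Lval b a c) with hpL | hLp
  · -- removing `2a = p·b + q·c` from `L·b` leaves a smaller multiple of `b` in `⟨a,c⟩`
    obtain ⟨d, hd⟩ := Nat.exists_eq_add_of_lt hpL
    obtain ⟨e, rfl⟩ := Nat.exists_eq_add_of_le hl
    rw [hd] at hrep
    have hmem : (d + 1) * b ∈ numSg a c := ⟨e, μ + q, by linarith⟩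
    have := Lval_le (Nat.succ_pos d) hmem
    omega
  · have hLb : Lval b a c * b = 2 * a := by
      nlinarith [Nat.mul_le_mul_right b hLp, Nat.mul_le_mul_right a hl]
    have := Nat.le_of_dvd two_pos
      (hab.symm.dvd_of_dvd_mul_right ⟨Lval b a c, by rw [← hLb]; ring⟩)
    omega

lemma exists_Lval_mul_eq_add (hab : Nat.Coprime a b) (hac : Nat.Coprime a c)
    (hbc : Nat.Coprime b c) (hb : 2 < b) (hc : 2 < c) (hba : b ≤ a)
    (h1 : a ∉ numSg b c) (h2 : 2 * a ∈ numSg b c) :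
    ∃ μ < a, Lval b a c * b = a + μ * c := by
  obtain ⟨hL0, l, μ, hrep⟩ := Lval_spec (a := b) (b := a) (c := c) (by omega)
  have hLc := Lval_lt_of_not_mem hbc h1
  have hl0 : l ≠ 0 := by
    rintro rfl
    have hdvd : c ∣ Lval b a c * b := ⟨μ, by rw [hrep]; ring⟩
    have := Nat.le_of_dvd hL0 (hbc.symm.dvd_of_dvd_mul_right hdvd)
    omega
  obtain rfl : l = 1 := by
    have := Lval_coeff_lt_two hab hac hb hc h2 hrep
    omega
  rw [one_mul] at hrep
  refine ⟨μ, ?_, hrep⟩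
  by_contra! hμ
  nlinarith [Nat.mul_le_mul_right c hμ, Nat.mul_le_mul_right b hLc, Nat.mul_le_mul_left c hba]

end Lval

lemma mul_modInv_mod_eq {a c n μ : ℕ} (ha : 1 < a) (hc : Nat.Coprime c a) (hμ : μ < a)
    (h : n = a + μ * c) : (n * modInv c a) % a = μ := by
  have : NeZero a := ⟨by omega⟩
  have hcast : ((n * modInv c a : ℕ) : ZMod a) = μ := by
    rw [Nat.cast_mul, modInv, ZMod.natCast_val, ZMod.cast_id, h]
    push_cast
    rw [ZMod.natCast_self, zero_add, mul_assoc,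
      ZMod.mul_inv_of_unit _ ((ZMod.isUnit_iff_coprime c a).mpr hc), mul_one]
  rw [← ZMod.val_natCast, hcast, ZMod.val_natCast, Nat.mod_eq_of_lt hμ]

lemma Lval_mul_modInv_mod_mul_eq {a b c : ℕ} (hab : Nat.Coprime a b) (hac : Nat.Coprime a c)
    (hbc : Nat.Coprime b c) (hb : 2 < b) (hc : 2 < c) (hba : b ≤ a)
    (h1 : a ∉ numSg b c) (h2 : 2 * a ∈ numSg b c) :
    (((Lval b a c * b * modInv c a) % a : ℕ) : ℤ) * c = (Lval b a c : ℤ) * b - a := by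
  obtain ⟨μ, hμ, hrep⟩ := exists_Lval_mul_eq_add hab hac hbc hb hc hba h1 h2
  rw [mul_modInv_mod_eq (by omega) hac.symm hμ hrep]
  have : (Lval b a c : ℤ) * b = a + μ * c := by exact_mod_cast hrep
  linarith

/-- Lemma 8(2): for pairwise coprime `a₁ > a₂ > a₃ > 1` with `L₁ = 2`, for
each `{j,k} = {2,3}` one has `[L_j·a_j·a_k⁻¹]_{a₁}·a_k = L_j·a_j − a₁`. -/
theorem stmt11 (a₁ a₂ a₃ : ℕ)
    (h12 : Nat.Coprime a₁ a₂) (h13 : Nat.Coprime a₁ a₃) (h23 : Nat.Coprime a₂ a₃)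
    (hgt : a₁ > a₂ ∧ a₂ > a₃ ∧ a₃ > 1)
    (hL₁ : Lval a₁ a₂ a₃ = 2) :
    (((Lval a₂ a₁ a₃ * a₂ * modInv a₃ a₁) % a₁ : ℕ) : ℤ) * a₃ =
        (Lval a₂ a₁ a₃ : ℤ) * a₂ - a₁ ∧
    (((Lval a₃ a₁ a₂ * a₃ * modInv a₂ a₁) % a₁ : ℕ) : ℤ) * a₂ =
        (Lval a₃ a₁ a₂ : ℤ) * a₃ - a₁ := by
  obtain ⟨h21, h32, h31⟩ := hgt
  obtain ⟨h1, h2⟩ := not_mem_and_two_mul_mem_of_Lval_eq_two hL₁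
  have ha₃ : 2 < a₃ := by
    by_contra! hle
    obtain rfl : a₃ = 2 := by omega
    exact h1 (mem_numSg_two h13.odd_of_right h23.odd_of_right h21.le)
  refine ⟨Lval_mul_modInv_mod_mul_eq h12 h13 h23 (by omega) ha₃ h21.le h1 h2, ?_⟩
  rw [numSg_comm] at h1 h2
  exact Lval_mul_modInv_mod_mul_eq h13 h12 h23.symm ha₃ (by omega) (by omega) h1 h2
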